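/- (Proposition 1) Let λ ≥ 0, δ ∈ (0,1), and let Σ* be positive definite. Let θ̂ be a random vector on a probability space such that Prob(θ̂ − θ* ∈ λU_{Σ*}) ≥ 1 − δ. Let x̂ : ℝ^d → 𝒳 be a map such that, for every θ, x̂(θ) is an optimal solution of the robust optimization problem with scale λ, center θ and shape Σ*, and such that f*(x̂(θ̂)) is a measurable extended-real random variable. Let x*(2λ) be an optimal solution of the robust optimization problem with scale 2λ, center θ* and shape Σ*. Then VaR_δ[f*(x̂(θ̂))] ≤ f*(x*(2λ)), where VaR_δ[Z] := inf{η ∈ ℝ : Prob(Z ≤ η) ≥ 1 − δ}. -/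

import Mathlib

open MeasureTheory ProbabilityTheory Matrix
open scoped ENNReal Pointwise

/-- The ellipsoid `U_Σ = {u : uᵀ Σ⁻¹ u ≤ 1}`. -/
def USet {d : ℕ} (Sg : Matrix (Fin d) (Fin d) ℝ) : Set (Fin d → ℝ) :=
  {u | u ⬝ᵥ (Sg⁻¹ *ᵥ u) ≤ 1}

/-- `r_k(x; Σ) = max_{u ∈ U_Σ} g_k(x, u)` where `g_k(x, θ) = θᵀ v_k(x)`. -/
noncomputable def rk {d m K : ℕ} (v : Fin K → (Fin m → ℝ) → (Fin d → ℝ))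
    (k : Fin K) (x : Fin m → ℝ) (Sg : Matrix (Fin d) (Fin d) ℝ) : ℝ :=
  sSup ((fun u => u ⬝ᵥ v k x) '' USet Sg)

/-- `S(λ, Y; Σ)`, the set of parameter errors that are uniformly small over `Y`. -/
noncomputable def SErr {d m K : ℕ} (v : Fin K → (Fin m → ℝ) → (Fin d → ℝ))
    (lam : ℝ) (Y : Set (Fin m → ℝ)) (Sg : Matrix (Fin d) (Fin d) ℝ) : Set (Fin d → ℝ) :=
  {Δ | ∀ k, ∀ y ∈ Y, |Δ ⬝ᵥ v k y| ≤ lam * rk v k y Sg}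

/-- Feasibility for the robust optimization problem with scale `lam`, center `θ`, shape `Σ`. -/
def Feasible {d m K : ℕ} (X : Set (Fin m → ℝ)) (v : Fin K → (Fin m → ℝ) → (Fin d → ℝ))
    (lam : ℝ) (θ : Fin d → ℝ) (Sg : Matrix (Fin d) (Fin d) ℝ) (x : Fin m → ℝ) : Prop :=
  x ∈ X ∧ ∀ k, ∀ u ∈ USet Sg, 0 ≤ (θ + lam • u) ⬝ᵥ v k x

/-- Optimal solution of the robust optimization problem. -/
def IsOptimal {d m K : ℕ} (X : Set (Fin m → ℝ)) (f : (Fin m → ℝ) → ℝ)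
    (v : Fin K → (Fin m → ℝ) → (Fin d → ℝ))
    (lam : ℝ) (θ : Fin d → ℝ) (Sg : Matrix (Fin d) (Fin d) ℝ) (x : Fin m → ℝ) : Prop :=
  Feasible X v lam θ Sg x ∧ ∀ y, Feasible X v lam θ Sg y → f x ≤ f y

open Classical in
/-- The true objective `f*`, which is `∞` when a true constraint is violated. -/
noncomputable def fStar {d m K : ℕ} (f : (Fin m → ℝ) → ℝ)
    (v : Fin K → (Fin m → ℝ) → (Fin d → ℝ)) (θs : Fin d → ℝ) (x : Fin m → ℝ) : EReal :=
  if ∀ k, 0 ≤ θs ⬝ᵥ v k x then (f x : EReal) else ⊤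

/-- The standard Gaussian measure on `ℝ^d`. -/
noncomputable def stdGaussian (d : ℕ) : Measure (Fin d → ℝ) :=
  Measure.pi fun _ => gaussianReal 0 1

open Classical in
/-- The positive semidefinite square root (junk value `0` off the psd cone). -/
noncomputable def matSqrt {d : ℕ} (A : Matrix (Fin d) (Fin d) ℝ) : Matrix (Fin d) (Fin d) ℝ :=
  if h : A.PosSemidef then
    (h.1.eigenvectorUnitary : Matrix (Fin d) (Fin d) ℝ) *
      diagonal ((↑) ∘ (√·) ∘ h.1.eigenvalues) *
      (star h.1.eigenvectorUnitary : Matrix (Fin d) (Fin d) ℝ)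
  else 0

/-- The centered Gaussian measure on `ℝ^d` with covariance `A`. -/
noncomputable def gaussOf {d : ℕ} (A : Matrix (Fin d) (Fin d) ℝ) : Measure (Fin d → ℝ) :=
  (stdGaussian d).map (fun z => matSqrt A *ᵥ z)

/-- The Euclidean norm on `Fin d → ℝ`. -/
noncomputable def euclNorm {d : ℕ} (z : Fin d → ℝ) : ℝ := Real.sqrt (∑ i, z i ^ 2)

/-- Quantile function of the chi distribution with `d` degrees of freedom. -/
noncomputable def chiQuantile (d : ℕ) (p : ℝ) : ℝ :=
  sInf {t : ℝ | 0 ≤ t ∧ p ≤ (stdGaussian d {z | euclNorm z ≤ t}).toReal}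

/-- The minimum spatial uniform bound `μ(p, Y; P, Σ)` (`⊤` when infeasible, `0` for `p ≤ 0`). -/
noncomputable def muB {d m K : ℕ} (v : Fin K → (Fin m → ℝ) → (Fin d → ℝ)) (p : ℝ)
    (Y : Set (Fin m → ℝ)) (P : Measure (Fin d → ℝ)) (Sg : Matrix (Fin d) (Fin d) ℝ) : ℝ≥0∞ :=
  ⨅ (μ : ℝ) (_ : 0 ≤ μ ∧ ENNReal.ofReal p ≤ P (SErr v μ Y Sg)), ENNReal.ofReal μ

/-- The value-at-risk `VaR_δ[Z] = inf {η ∈ ℝ : Prob(Z ≤ η) ≥ 1 − δ}` (as an extended real,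
`⊤` when no such `η` exists). -/
noncomputable def VaR {Ω : Type*} [MeasurableSpace Ω] (δ : ℝ) (P : Measure Ω)
    (Z : Ω → EReal) : EReal :=
  sInf ((fun η : ℝ => (η : EReal)) ''
    {η : ℝ | ENNReal.ofReal (1 - δ) ≤ P {ω | Z ω ≤ (η : EReal)}})

/-!
On the event `θ̂ - θ* ∈ λ U_Σ*`, the robust problem centred at `θ̂` is sandwiched between two
problems centred at `θ*`. Its uncertainty set `θ̂ + λ U` contains `θ*` (as `U = -U`), so `x̂(θ̂)`
satisfies the true constraints; and it is contained in `θ* + 2λ U` (as `U` is convex), so `x*(2λ)`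
is feasible for it and `f(x̂(θ̂)) ≤ f(x*(2λ))`. Hence `f*(x̂(θ̂)) ≤ f*(x*(2λ))` with probability at
least `1 - δ`, which is the VaR bound.
-/

section Ellipsoid

variable {d : ℕ} {Sg : Matrix (Fin d) (Fin d) ℝ}

theorem zero_mem_USet : (0 : Fin d → ℝ) ∈ USet Sg := by
  simp [USet]

theorem neg_mem_USet {u : Fin d → ℝ} (hu : u ∈ USet Sg) : -u ∈ USet Sg := by
  simpa [USet, mulVec_neg] using hu

theorem convex_USet (hSg : Sg⁻¹.PosSemidef) : Convex ℝ (USet Sg) := by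
  intro x hx y hy a b ha hb hab
  obtain rfl : b = 1 - a := by linarith
  have hxy : 0 ≤ (x - y) ⬝ᵥ (Sg⁻¹ *ᵥ (x - y)) := by
    simpa using hSg.re_dotProduct_nonneg (x - y)
  have hx' : x ⬝ᵥ (Sg⁻¹ *ᵥ x) ≤ 1 := hx
  have hy' : y ⬝ᵥ (Sg⁻¹ *ᵥ y) ≤ 1 := hy
  have key : (a • x + (1 - a) • y) ⬝ᵥ (Sg⁻¹ *ᵥ (a • x + (1 - a) • y)) =
      a * (x ⬝ᵥ (Sg⁻¹ *ᵥ x)) + (1 - a) * (y ⬝ᵥ (Sg⁻¹ *ᵥ y)) -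
        a * (1 - a) * ((x - y) ⬝ᵥ (Sg⁻¹ *ᵥ (x - y))) := by
    simp only [mulVec_add, mulVec_sub, mulVec_smul, add_dotProduct, sub_dotProduct,
      dotProduct_add, dotProduct_sub, smul_dotProduct, dotProduct_smul, smul_eq_mul]
    ring
  change _ ≤ (1 : ℝ)
  rw [key]
  nlinarith [mul_nonneg ha hb, mul_nonneg (mul_nonneg ha hb) hxy]

theorem sub_mem_smul_USet_comm {lam : ℝ} {θ θ' : Fin d → ℝ} (h : θ - θ' ∈ lam • USet Sg) :
    θ' - θ ∈ lam • USet Sg := by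
  obtain ⟨u, hu, hθ : lam • u = θ - θ'⟩ := h
  exact ⟨-u, neg_mem_USet hu, show lam • -u = θ' - θ by rw [smul_neg, hθ, neg_sub]⟩

end Ellipsoid

section RobustProblem

variable {d m K : ℕ} {X : Set (Fin m → ℝ)} {f : (Fin m → ℝ) → ℝ}
  {v : Fin K → (Fin m → ℝ) → (Fin d → ℝ)} {lam : ℝ} {θ θs : Fin d → ℝ}
  {Sg : Matrix (Fin d) (Fin d) ℝ} {x : Fin m → ℝ}

theorem Feasible.of_two_mul (hU : Convex ℝ (USet Sg)) (hx : Feasible X v (2 * lam) θs Sg x)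
    (hθ : θ - θs ∈ lam • USet Sg) : Feasible X v lam θ Sg x := by
  obtain ⟨u₀, hu₀, hθ : lam • u₀ = θ - θs⟩ := hθ
  obtain rfl : θ = θs + lam • u₀ := by rw [hθ]; abel
  refine ⟨hx.1, fun k u hu => ?_⟩
  have hmid : (1 / 2 : ℝ) • u₀ + (1 / 2 : ℝ) • u ∈ USet Sg :=
    hU hu₀ hu (by norm_num) (by norm_num) (by norm_num)
  convert hx.2 k _ hmid using 2
  module

theorem Feasible.nonneg_of_sub_mem (hx : Feasible X v lam θ Sg x)
    (hθ : θs - θ ∈ lam • USet Sg) (k : Fin K) : 0 ≤ θs ⬝ᵥ v k x := by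
  obtain ⟨u, hu, hθ : lam • u = θs - θ⟩ := hθ
  simpa [hθ] using hx.2 k u hu

theorem fStar_eq_of_feasible (hx : Feasible X v lam θ Sg x) (hθ : θs - θ ∈ lam • USet Sg) :
    fStar f v θs x = f x :=
  if_pos (hx.nonneg_of_sub_mem hθ)

theorem fStar_eq_of_feasible_self (hx : Feasible X v lam θs Sg x) : fStar f v θs x = f x :=
  fStar_eq_of_feasible hx (sub_self θs ▸ Set.zero_mem_smul_set zero_mem_USet)

theorem fStar_le_of_isOptimal (hU : Convex ℝ (USet Sg)) {x₂ : Fin m → ℝ}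
    (hx : IsOptimal X f v lam θ Sg x) (hx₂ : IsOptimal X f v (2 * lam) θs Sg x₂)
    (hθ : θ - θs ∈ lam • USet Sg) : fStar f v θs x ≤ fStar f v θs x₂ := by
  rw [fStar_eq_of_feasible hx.1 (sub_mem_smul_USet_comm hθ), fStar_eq_of_feasible_self hx₂.1]
  exact_mod_cast hx.2 x₂ (hx₂.1.of_two_mul hU hθ)

end RobustProblem

theorem VaR_le_of_le_measure {Ω : Type*} [MeasurableSpace Ω] {δ : ℝ} {P : Measure Ω}
    {Z : Ω → EReal} {η : ℝ} (h : ENNReal.ofReal (1 - δ) ≤ P {ω | Z ω ≤ η}) :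
    VaR δ P Z ≤ η :=
  sInf_le ⟨η, h, rfl⟩

theorem stmt2_general {d m K : ℕ}
    {Ω : Type*} [MeasurableSpace Ω] (P : Measure Ω)
    (θstar : Fin d → ℝ) (v : Fin K → (Fin m → ℝ) → (Fin d → ℝ))
    (X : Set (Fin m → ℝ)) (f : (Fin m → ℝ) → ℝ)
    (lam : ℝ) (δ : ℝ)
    (Sgstar : Matrix (Fin d) (Fin d) ℝ) (hSg : Sgstar.PosDef)
    (θhat : Ω → Fin d → ℝ)
    (hprob : ENNReal.ofReal (1 - δ) ≤ P {ω | θhat ω - θstar ∈ lam • USet Sgstar})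
    (xhat : (Fin d → ℝ) → (Fin m → ℝ))
    (hopt : ∀ θ, IsOptimal X f v lam θ Sgstar (xhat θ))
    (x2 : Fin m → ℝ) (hx2 : IsOptimal X f v (2 * lam) θstar Sgstar x2) :
    VaR δ P (fun ω => fStar f v θstar (xhat (θhat ω))) ≤ fStar f v θstar x2 := by
  have hfx2 : fStar f v θstar x2 = f x2 := fStar_eq_of_feasible_self hx2.1
  rw [hfx2]
  refine VaR_le_of_le_measure (hprob.trans (measure_mono fun ω hω => ?_))
  exact hfx2 ▸ fStar_le_of_isOptimal (convex_USet hSg.inv.posSemidef) (hopt _) hx2 hω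

/-- Proposition 1. -/
theorem stmt2 {d m K : ℕ} (hd : 1 ≤ d) (hm : 1 ≤ m) (hK : 1 ≤ K)
    {Ω : Type*} [MeasurableSpace Ω] (P : Measure Ω) [IsProbabilityMeasure P]
    (θstar : Fin d → ℝ) (v : Fin K → (Fin m → ℝ) → (Fin d → ℝ))
    (X : Set (Fin m → ℝ)) (f : (Fin m → ℝ) → ℝ)
    (lam : ℝ) (hlam : 0 ≤ lam) (δ : ℝ) (hδ0 : 0 < δ) (hδ1 : δ < 1)
    (Sgstar : Matrix (Fin d) (Fin d) ℝ) (hSg : Sgstar.PosDef)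
    (θhat : Ω → Fin d → ℝ)
    (hprob : ENNReal.ofReal (1 - δ) ≤ P {ω | θhat ω - θstar ∈ lam • USet Sgstar})
    (xhat : (Fin d → ℝ) → (Fin m → ℝ))
    (hopt : ∀ θ, IsOptimal X f v lam θ Sgstar (xhat θ))
    (hmeas : Measurable (fun ω => fStar f v θstar (xhat (θhat ω))))
    (x2 : Fin m → ℝ) (hx2 : IsOptimal X f v (2 * lam) θstar Sgstar x2) :
    VaR δ P (fun ω => fStar f v θstar (xhat (θhat ω))) ≤ fStar f v θstar x2 :=
  stmt2_general P θstar v X f lam δ Sgstar hSg θhat hprob xhat hopt x2 hx2
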